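/- Let 1 < p < ∞ and v ∈ Â_p, i.e., v = (Mh)^{1−p} u for some h ∈ L¹_loc(ℝⁿ) with Mh finite a.e. and some u ∈ A₁. Then v is a doubling weight: there exists a constant Δ_v ≤ C_n ‖u‖_{A₁} (depending polynomially on ‖v‖_{Â_p}^p) such that v(2Q) ≤ Δ_v v(Q) for every cube Q, where 2Q is the cube with the same center and twice the side length. -/

import Mathlib

open MeasureTheory ENNReal NNReal Set Filter

noncomputable def wInt {n : ℕ} (v : (Fin n → ℝ) → ℝ) (E : Set (Fin n → ℝ)) : ℝ≥0∞ :=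
  ∫⁻ x in E, ENNReal.ofReal (v x)

noncomputable def maxOp {n : ℕ} (h : (Fin n → ℝ) → ℝ) (x : Fin n → ℝ) : ℝ≥0∞ :=
  ⨆ (c : Fin n → ℝ) (r : ℝ) (_ : 0 < r) (_ : x ∈ Metric.closedBall c r),
    (∫⁻ y in Metric.closedBall c r, ENNReal.ofReal |h y|) / volume (Metric.closedBall c r)

def IsA1 {n : ℕ} (u : (Fin n → ℝ) → ℝ) (C : ℝ) : Prop :=
  (∀ x, 0 ≤ u x) ∧ MeasureTheory.LocallyIntegrable u volume ∧
    ∀ (c : Fin n → ℝ) (r : ℝ), 0 < r →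
      wInt u (Metric.closedBall c r) ≤
        ENNReal.ofReal C *
          essInf (fun y => ENNReal.ofReal (u y)) (volume.restrict (Metric.closedBall c r)) *
          volume (Metric.closedBall c r)

noncomputable def distribF {n : ℕ} (v : (Fin n → ℝ) → ℝ) (g : (Fin n → ℝ) → ℝ≥0∞)
    (y : ℝ≥0∞) : ℝ≥0∞ :=
  wInt v {x | y < g x}

noncomputable def wkLorentz {n : ℕ} (p : ℝ) (v : (Fin n → ℝ) → ℝ)
    (g : (Fin n → ℝ) → ℝ≥0∞) : ℝ≥0∞ :=
  ⨆ y : ℝ≥0, (y : ℝ≥0∞) * (distribF v g y) ^ (1 / p)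

noncomputable def lorentzOne {n : ℕ} (p : ℝ) (v : (Fin n → ℝ) → ℝ)
    (g : (Fin n → ℝ) → ℝ≥0∞) : ℝ≥0∞ :=
  ENNReal.ofReal p * ∫⁻ y in Set.Ioi (0:ℝ), (distribF v g (ENNReal.ofReal y)) ^ (1 / p)

noncomputable def ofFun {n : ℕ} (f : (Fin n → ℝ) → ℝ) : (Fin n → ℝ) → ℝ≥0∞ :=
  fun x => ENNReal.ofReal |f x|

noncomputable def l1Norm {n : ℕ} (u f : (Fin n → ℝ) → ℝ) : ℝ≥0∞ :=
  ∫⁻ x, ENNReal.ofReal |f x| * ENNReal.ofReal (u x)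

/-! Let `m = inf_{2Q} Mh`, which is positive and finite because `0 < Mh < ∞` a.e.; then
`v ≤ m^{1-p} u` on `2Q`. At points of `Q`, balls smaller than `Q` only see `h` on `3Q`, and larger
balls are comparable to balls containing `2Q`, so `Mh ≤ max (M(h 1_{3Q})) (5ⁿ m)` there. The weak
type `(1,1)` inequality for `M(h 1_{3Q})` yields `G ⊆ Q` with `|Q| ≤ 2|G|` on which `Mh ≲ m`,
i.e. `u ≲ m^{p-1} v`. With the `A₁` condition on `2Q`,
`v(2Q) ≤ m^{1-p} u(2Q) ≲ ‖u‖_{A₁} m^{1-p} (ess inf_Q u) |G| ≤ ‖u‖_{A₁} m^{1-p} u(G)`,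
which is `≲ ‖u‖_{A₁} v(Q)`. -/

open Metric

namespace ENNReal

lemma rpow_le_rpow_of_nonpos {a b : ℝ≥0∞} {t : ℝ} (ht : t ≤ 0) (hab : a ≤ b) : b ^ t ≤ a ^ t := by
  rw [← neg_neg t, ENNReal.rpow_neg a, ENNReal.rpow_neg b]
  exact ENNReal.inv_le_inv.mpr (ENNReal.rpow_le_rpow hab (neg_nonneg.mpr ht))

lemma ofReal_toReal_rpow_of_nonpos {x : ℝ≥0∞} (hx : x ≠ 0) {t : ℝ} (ht : t ≤ 0) :
    ENNReal.ofReal (x.toReal ^ t) = x ^ t := by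
  rw [ENNReal.toReal_rpow, ENNReal.ofReal_toReal]
  simp [ENNReal.rpow_eq_top_iff, hx, not_lt.mpr ht]

end ENNReal

section Measure

variable {α : Type*} [MeasurableSpace α] {μ : Measure α} {s t : Set α}

lemma measure_le_two_mul_measure_diff (hs : μ s ≠ ⊤) (ht : μ t ≤ μ s / 2) :
    μ s ≤ 2 * μ (s \ t) := by
  have hhalf : μ s / 2 ≤ μ (s \ t) := by
    refine (ENNReal.add_le_add_iff_left (ENNReal.div_ne_top hs two_ne_zero)).mp ?_
    calc μ s / 2 + μ s / 2 = μ s := ENNReal.add_halves _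
      _ ≤ μ (s ∩ t) + μ (s \ t) := measure_le_inter_add_sdiff μ s t
      _ ≤ μ s / 2 + μ (s \ t) := by gcongr; exact (measure_mono inter_subset_right).trans ht
  calc μ s = 2 * (μ s / 2) := (ENNReal.mul_div_cancel two_ne_zero ENNReal.ofNat_ne_top).symm
    _ ≤ 2 * μ (s \ t) := by gcongr

lemma setLAverage_le_mul_setLAverage (f : α → ℝ≥0∞) (hst : s ⊆ t) (ht0 : μ t ≠ 0)
    (httop : μ t ≠ ⊤) {K : ℝ≥0∞} (hK : μ t ≤ K * μ s) :
    ⨍⁻ x in s, f x ∂μ ≤ K * ⨍⁻ x in t, f x ∂μ := by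
  rw [setLAverage_eq, setLAverage_eq]
  refine ENNReal.div_le_of_le_mul ?_
  calc ∫⁻ x in s, f x ∂μ ≤ ∫⁻ x in t, f x ∂μ := lintegral_mono_set hst
    _ = (∫⁻ x in t, f x ∂μ) / μ t * μ t := (ENNReal.div_mul_cancel ht0 httop).symm
    _ ≤ (∫⁻ x in t, f x ∂μ) / μ t * (K * μ s) := by gcongr
    _ = K * ((∫⁻ x in t, f x ∂μ) / μ t) * μ s := by ring

lemma essInf_mul_measure_le_setLIntegral (f : α → ℝ≥0∞) (hts : t ⊆ s) :
    essInf f (μ.restrict s) * μ t ≤ ∫⁻ x in t, f x ∂μ := by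
  rw [← setLIntegral_const]
  exact lintegral_mono_ae (ae_mono (Measure.restrict_mono hts le_rfl) ae_essInf_le)

end Measure

section Cubes

variable {n : ℕ}

lemma volume_closedBall_mul (c : Fin n → ℝ) {a r : ℝ} (ha : 0 ≤ a) (hr : 0 ≤ r) :
    volume (closedBall c (a * r)) = ENNReal.ofReal a ^ n * volume (closedBall c r) := by
  rw [Real.volume_pi_closedBall c (mul_nonneg ha hr), Real.volume_pi_closedBall c hr,
    Fintype.card_fin, ← ENNReal.ofReal_pow ha, ← ENNReal.ofReal_mul (by positivity), ← mul_pow,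
    mul_left_comm]

lemma le_of_volume_closedBall_le (hn : n ≠ 0) (c : Fin n → ℝ) {r : ℝ} (hr : 0 ≤ r)
    {V : ℝ≥0∞} (hV : V ≠ ⊤) (h : volume (closedBall c r) ≤ V) :
    r ≤ V.toReal ^ (n : ℝ)⁻¹ / 2 := by
  rw [Real.volume_pi_closedBall c hr, Fintype.card_fin,
    ENNReal.ofReal_le_iff_le_toReal hV] at h
  have hroot : ((2 * r) ^ n) ^ (n : ℝ)⁻¹ = 2 * r := by
    rw [← Real.rpow_natCast, ← Real.rpow_mul (by positivity),
      mul_inv_cancel₀ (Nat.cast_ne_zero.mpr hn), Real.rpow_one]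
  have := Real.rpow_le_rpow (by positivity) h (by positivity : (0 : ℝ) ≤ (n : ℝ)⁻¹)
  linarith

end Cubes

section MaximalFunction

variable {n : ℕ} {h : (Fin n → ℝ) → ℝ} {x c : Fin n → ℝ} {r : ℝ}

lemma setLAverage_le_maxOp (h : (Fin n → ℝ) → ℝ) (hr : 0 < r) (hx : x ∈ closedBall c r) :
    ⨍⁻ y in closedBall c r, ENNReal.ofReal |h y| ∂volume ≤ maxOp h x := by
  rw [setLAverage_eq]
  exact le_iSup_of_le c <| le_iSup_of_le r <| le_iSup_of_le hr <| le_iSup_of_le hx le_rfl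

lemma maxOp_le {a : ℝ≥0∞}
    (H : ∀ c r, 0 < r → x ∈ closedBall c r →
      ⨍⁻ y in closedBall c r, ENNReal.ofReal |h y| ∂volume ≤ a) :
    maxOp h x ≤ a := by
  refine iSup_le fun c => iSup_le fun r => iSup_le fun hr => iSup_le fun hx => ?_
  rw [← setLAverage_eq]
  exact H c r hr hx

lemma setLAverage_le_iInf_maxOp (h : (Fin n → ℝ) → ℝ) (hr : 0 < r) {S : Set (Fin n → ℝ)}
    (hS : S ⊆ closedBall c r) :
    ⨍⁻ y in closedBall c r, ENNReal.ofReal |h y| ∂volume ≤ ⨅ x ∈ S, maxOp h x :=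
  le_iInf₂ fun _ hx => setLAverage_le_maxOp h hr (hS hx)

lemma exists_closedBall_of_lt_maxOp {lam : ℝ≥0∞} (hx : lam < maxOp h x) :
    ∃ c r, 0 < r ∧ x ∈ closedBall c r ∧
      lam * volume (closedBall c r) < ∫⁻ y in closedBall c r, ENNReal.ofReal |h y| := by
  by_contra! H
  refine hx.not_ge (maxOp_le fun c r hr hxB => ?_)
  rw [setLAverage_eq]
  exact ENNReal.div_le_of_le_mul (H c r hr hxB)

/-- The weak type `(1,1)` inequality, by the Vitali covering lemma. -/
theorem mul_volume_lt_maxOp_le (hn : n ≠ 0) (h : (Fin n → ℝ) → ℝ) (lam : ℝ≥0∞) :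
    lam * volume {x | lam < maxOp h x} ≤ 5 ^ n * ∫⁻ y, ENNReal.ofReal |h y| := by
  set T := ∫⁻ y, ENNReal.ofReal |h y|
  set E := {x | lam < maxOp h x}
  rcases eq_or_ne lam 0 with rfl | hlam0
  · simp
  rcases eq_or_ne T ⊤ with hT | hT
  · simp [hT, ENNReal.mul_top (pow_ne_zero n (by norm_num : (5 : ℝ≥0∞) ≠ 0))]
  choose! c ρ hρ hxB hint using fun x (hx : x ∈ E) => exists_closedBall_of_lt_maxOp hx
  have hρR : ∀ x ∈ E, ρ x ≤ (T / lam).toReal ^ (n : ℝ)⁻¹ / 2 := fun x hx =>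
    le_of_volume_closedBall_le hn _ (hρ x hx).le (ENNReal.div_ne_top hT hlam0) <|
      ENNReal.le_div_iff_mul_le (.inl hlam0) (.inr hT) |>.mpr <| by
        rw [mul_comm]; exact (hint x hx).le.trans (setLIntegral_le_lintegral _ _)
  obtain ⟨w, hwE, hdisj, hcov⟩ :=
    Vitali.exists_disjoint_subfamily_covering_enlargement_closedBall E c ρ _ hρR 5 (by norm_num)
  have hw : w.Countable := hdisj.countable_of_nonempty_interior fun x hx =>
    (nonempty_ball.mpr (hρ x (hwE hx))).mono ball_subset_interior_closedBall
  calc lam * volume E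
      ≤ lam * volume (⋃ x ∈ w, closedBall (c x) (5 * ρ x)) := by
        gcongr
        intro y hy
        obtain ⟨x, hxw, hsub⟩ := hcov y hy
        exact mem_biUnion hxw (hsub (hxB y hy))
    _ ≤ lam * ∑' x : w, 5 ^ n * volume (closedBall (c x) (ρ x)) := by
        gcongr
        refine (measure_biUnion_le volume hw _).trans_eq (tsum_congr fun x => ?_)
        rw [volume_closedBall_mul _ (by norm_num) (hρ x (hwE x.2)).le, ENNReal.ofReal_ofNat]
    _ = 5 ^ n * ∑' x : w, lam * volume (closedBall (c x) (ρ x)) := by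
        rw [ENNReal.tsum_mul_left, ENNReal.tsum_mul_left]; ring
    _ ≤ 5 ^ n * ∑' x : w, ∫⁻ y in closedBall (c x) (ρ x), ENNReal.ofReal |h y| := by
        gcongr with x
        exact (hint x (hwE x.2)).le
    _ ≤ 5 ^ n * T := by
        rw [← lintegral_biUnion hw (fun _ _ => measurableSet_closedBall) hdisj]
        gcongr
        exact setLIntegral_le_lintegral _ _

lemma maxOp_le_max_maxOp_indicator (h : (Fin n → ℝ) → ℝ) (hr : 0 < r) {y : Fin n → ℝ}
    (hy : y ∈ closedBall c r) :
    maxOp h y ≤ max (maxOp ((closedBall c (3 * r)).indicator h) y)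
      (5 ^ n * ⨅ x ∈ closedBall c (2 * r), maxOp h x) := by
  refine maxOp_le fun c' r' hr' hyB => ?_
  rw [mem_closedBall] at hy hyB
  rcases lt_or_ge r' r with hsmall | hlarge
  · have hsub : closedBall c' r' ⊆ closedBall c (3 * r) := closedBall_subset_closedBall' <| by
      linarith [dist_triangle c' y c, dist_comm c' y]
    refine le_max_of_le_left <|
      (setLAverage_le_maxOp _ hr' (mem_closedBall.mpr hyB)).trans_eq' ?_
    refine setLAverage_congr_fun measurableSet_closedBall fun z hz => ?_
    simp only [indicator_of_mem (hsub hz)]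
  · have hsub : closedBall c' r' ⊆ closedBall c' (r' + 4 * r) :=
      closedBall_subset_closedBall (by linarith)
    have hvol : volume (closedBall c' (r' + 4 * r)) ≤ 5 ^ n * volume (closedBall c' r') := by
      calc volume (closedBall c' (r' + 4 * r)) ≤ volume (closedBall c' (5 * r')) :=
            measure_mono (closedBall_subset_closedBall (by linarith))
        _ = 5 ^ n * volume (closedBall c' r') := by
            rw [volume_closedBall_mul _ (by norm_num) hr'.le, ENNReal.ofReal_ofNat]
    refine le_max_of_le_right ((setLAverage_le_mul_setLAverage _ hsub
      (measure_closedBall_pos _ _ (by linarith)).ne' measure_closedBall_lt_top.ne hvol).trans ?_)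
    gcongr
    refine setLAverage_le_iInf_maxOp h (by linarith) fun x hx => ?_
    rw [mem_closedBall] at hx ⊢
    linarith [dist_triangle4 x c y c', dist_comm c y]

lemma iInf_maxOp_closedBall_ne_top (hfin : ∀ᵐ x, maxOp h x < ⊤) (hr : 0 < r) :
    ⨅ x ∈ closedBall c r, maxOp h x ≠ ⊤ := by
  intro htop
  have : (ae (volume.restrict (closedBall c r))).NeBot :=
    ae_neBot.mpr (by simpa using (measure_closedBall_pos volume c hr).ne')
  obtain ⟨x, hxfin, hx⟩ := Filter.Eventually.exists (f := ae (volume.restrict (closedBall c r)))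
    ((ae_restrict_of_ae hfin).and (ae_restrict_mem measurableSet_closedBall))
  exact hxfin.ne (top_le_iff.mp (htop ▸ biInf_le _ hx))

/-- If `Mh` had infimum `0` on a ball, `h` would vanish on all larger concentric balls,
hence `Mh ≡ 0`. -/
lemma iInf_maxOp_closedBall_ne_zero (hpos : ∀ᵐ x, 0 < maxOp h x) (hr : 0 < r) :
    ⨅ x ∈ closedBall c r, maxOp h x ≠ 0 := by
  intro hzero
  have hvanish : ∀ s, r ≤ s → ∫⁻ y in closedBall c s, ENNReal.ofReal |h y| = 0 := by
    intro s hs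
    have := (setLAverage_le_iInf_maxOp h (hr.trans_le hs)
      (closedBall_subset_closedBall hs)).trans_eq hzero
    rw [nonpos_iff_eq_zero, setLAverage_eq, ENNReal.div_eq_zero_iff] at this
    exact this.resolve_right measure_closedBall_lt_top.ne
  obtain ⟨x, hx⟩ := hpos.exists
  refine hx.ne' (nonpos_iff_eq_zero.mp (maxOp_le fun c' r' hr' _ => ?_))
  rw [setLAverage_eq, nonpos_iff_eq_zero, ENNReal.div_eq_zero_iff]
  refine .inl (nonpos_iff_eq_zero.mp ?_)
  calc ∫⁻ y in closedBall c' r', ENNReal.ofReal |h y|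
      ≤ ∫⁻ y in closedBall c (max r (r' + dist c' c)), ENNReal.ofReal |h y| :=
        lintegral_mono_set (closedBall_subset_closedBall' (le_max_right _ _))
    _ = 0 := hvanish _ (le_max_left _ _)

lemma exists_subset_maxOp_le (hn : n ≠ 0) (h : (Fin n → ℝ) → ℝ) (hr : 0 < r)
    (hm0 : ⨅ x ∈ closedBall c (2 * r), maxOp h x ≠ 0)
    (hmtop : ⨅ x ∈ closedBall c (2 * r), maxOp h x ≠ ⊤) :
    ∃ G ⊆ closedBall c r, MeasurableSet G ∧ volume (closedBall c r) ≤ 2 * volume G ∧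
      ∀ y ∈ G, maxOp h y ≤ 2 * 15 ^ n * ⨅ x ∈ closedBall c (2 * r), maxOp h x := by
  set m := ⨅ x ∈ closedBall c (2 * r), maxOp h x
  set g := (closedBall c (3 * r)).indicator h
  set V := volume (closedBall c r)
  set E := {y | 2 * 15 ^ n * m < maxOp g y}
  have hg : ∫⁻ y, ENNReal.ofReal |g y| ≤ 3 ^ n * V * m := by
    have hvol3 : volume (closedBall c (3 * r)) = 3 ^ n * V := by
      rw [volume_closedBall_mul _ (by norm_num) hr.le, ENNReal.ofReal_ofNat]
    calc ∫⁻ y, ENNReal.ofReal |g y| = ∫⁻ y in closedBall c (3 * r), ENNReal.ofReal |h y| := by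
          rw [← lintegral_indicator measurableSet_closedBall]
          congr 1 with y
          by_cases hy : y ∈ closedBall c (3 * r) <;> simp [g, hy]
      _ = volume (closedBall c (3 * r)) *
            ⨍⁻ y in closedBall c (3 * r), ENNReal.ofReal |h y| ∂volume :=
          (measure_mul_setLAverage _ measure_closedBall_lt_top.ne).symm
      _ ≤ 3 ^ n * V * m := by
          rw [hvol3]
          gcongr
          exact setLAverage_le_iInf_maxOp h (by linarith)
            (closedBall_subset_closedBall (by linarith))
  have hlam0 : (2 * 15 ^ n * m : ℝ≥0∞) ≠ 0 := by simp [hm0]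
  have hlamtop : (2 * 15 ^ n * m : ℝ≥0∞) ≠ ⊤ := by simp [hmtop, ENNReal.mul_eq_top]
  have hE : volume E ≤ V / 2 := by
    refine (ENNReal.mul_le_mul_iff_right hlam0 hlamtop).mp ?_
    calc 2 * 15 ^ n * m * volume E ≤ 5 ^ n * ∫⁻ y, ENNReal.ofReal |g y| :=
          mul_volume_lt_maxOp_le hn g _
      _ ≤ 5 ^ n * (3 ^ n * V * m) := by gcongr
      _ = 2 * 15 ^ n * m * (V / 2) := by
          nth_rw 1 [← ENNReal.mul_div_cancel two_ne_zero ENNReal.ofNat_ne_top (b := V)]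
          rw [show (15 : ℝ≥0∞) = 5 * 3 by norm_num, mul_pow]
          ring
  refine ⟨closedBall c r \ toMeasurable volume E, sdiff_subset,
    measurableSet_closedBall.diff (measurableSet_toMeasurable _ _),
    measure_le_two_mul_measure_diff measure_closedBall_lt_top.ne
      (by rwa [measure_toMeasurable]), fun y hy => ?_⟩
  refine (maxOp_le_max_maxOp_indicator h hr hy.1).trans (max_le ?_ ?_)
  · exact not_lt.mp fun hlt => hy.2 (subset_toMeasurable _ _ hlt)
  · gcongr
    calc (5 : ℝ≥0∞) ^ n ≤ 15 ^ n := by gcongr; norm_num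
      _ ≤ 2 * 15 ^ n := le_mul_of_one_le_left (by positivity) one_le_two

end MaximalFunction

section Weight

variable {n : ℕ} {p : ℝ} {h u : (Fin n → ℝ) → ℝ} {S : Set (Fin n → ℝ)}

noncomputable def hatApWeight (p : ℝ) (h u : (Fin n → ℝ) → ℝ) (x : Fin n → ℝ) : ℝ :=
  (maxOp h x).toReal ^ (1 - p) * u x

/-- Despite the junk value `toReal ⊤ = 0`, the identity also holds where `Mh = ⊤`. -/
lemma ofReal_hatApWeight (hp : 1 ≤ p) {x : Fin n → ℝ} (hx : maxOp h x ≠ 0) :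
    ENNReal.ofReal (hatApWeight p h u x) = maxOp h x ^ (1 - p) * ENNReal.ofReal (u x) := by
  rw [hatApWeight, ENNReal.ofReal_mul (Real.rpow_nonneg ENNReal.toReal_nonneg _),
    ENNReal.ofReal_toReal_rpow_of_nonpos hx (by linarith)]

lemma wInt_hatApWeight_le (hp : 1 ≤ p) (hpos : ∀ᵐ x, 0 < maxOp h x) (hS : MeasurableSet S)
    {m : ℝ≥0∞} (hm0 : m ≠ 0) (hm : ∀ x ∈ S, m ≤ maxOp h x) :
    wInt (hatApWeight p h u) S ≤ m ^ (1 - p) * wInt u S := by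
  have hmp : m ^ (1 - p) ≠ ⊤ := by simp [ENNReal.rpow_eq_top_iff, hm0, hp]
  rw [wInt, wInt, ← lintegral_const_mul' _ _ hmp]
  refine lintegral_mono_ae ?_
  filter_upwards [ae_restrict_of_ae hpos, ae_restrict_mem hS] with x hx hxS
  rw [ofReal_hatApWeight hp hx.ne']
  gcongr ?_ * _
  exact ENNReal.rpow_le_rpow_of_nonpos (by linarith : 1 - p ≤ 0) (hm x hxS)

lemma wInt_le_wInt_hatApWeight (hp : 1 ≤ p) (hpos : ∀ᵐ x, 0 < maxOp h x)
    (hS : MeasurableSet S) {lam : ℝ≥0∞} (hlam0 : lam ≠ 0) (hlamtop : lam ≠ ⊤)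
    (hlam : ∀ x ∈ S, maxOp h x ≤ lam) :
    wInt u S ≤ lam ^ (p - 1) * wInt (hatApWeight p h u) S := by
  have hlamp : lam ^ (p - 1) ≠ ⊤ := by simp [ENNReal.rpow_eq_top_iff, hlamtop, hp]
  rw [wInt, wInt, ← lintegral_const_mul' _ _ hlamp]
  refine lintegral_mono_ae ?_
  filter_upwards [ae_restrict_of_ae hpos, ae_restrict_mem hS] with x hx hxS
  rw [ofReal_hatApWeight hp hx.ne', ← mul_assoc]
  refine le_mul_of_one_le_left zero_le ?_
  calc 1 = lam ^ (p - 1) * lam ^ (1 - p) := by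
        rw [← ENNReal.rpow_add _ _ hlam0 hlamtop]; norm_num
    _ ≤ lam ^ (p - 1) * maxOp h x ^ (1 - p) := by
        gcongr _ * ?_
        exact ENNReal.rpow_le_rpow_of_nonpos (by linarith : 1 - p ≤ 0) (hlam x hxS)

lemma IsA1.wInt_closedBall_two_mul_le {C : ℝ} (hu : IsA1 u C) (c : Fin n → ℝ) {r : ℝ}
    (hr : 0 < r) :
    wInt u (closedBall c (2 * r)) ≤ ENNReal.ofReal C *
      essInf (fun y => ENNReal.ofReal (u y)) (volume.restrict (closedBall c r)) *
        (2 ^ n * volume (closedBall c r)) := by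
  refine (hu.2.2 c (2 * r) (by linarith)).trans ?_
  rw [volume_closedBall_mul _ (by norm_num) hr.le, ENNReal.ofReal_ofNat]
  gcongr
  exact essInf_antitone_measure (Measure.absolutelyContinuous_of_le
    (Measure.restrict_mono (closedBall_subset_closedBall (by linarith)) le_rfl))

theorem wInt_hatApWeight_closedBall_two_mul_le (hn : n ≠ 0) (hp : 1 ≤ p) {C : ℝ}
    (hu : IsA1 u C) (hpos : ∀ᵐ x, 0 < maxOp h x) (hfin : ∀ᵐ x, maxOp h x < ⊤)
    (c : Fin n → ℝ) {r : ℝ} (hr : 0 < r) :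
    wInt (hatApWeight p h u) (closedBall c (2 * r)) ≤
      ENNReal.ofReal C * 2 ^ (n + 1) * (2 * 15 ^ n) ^ (p - 1) *
        wInt (hatApWeight p h u) (closedBall c r) := by
  set m := ⨅ x ∈ closedBall c (2 * r), maxOp h x
  set e := essInf (fun y => ENNReal.ofReal (u y)) (volume.restrict (closedBall c r))
  have hm0 : m ≠ 0 := iInf_maxOp_closedBall_ne_zero hpos (by linarith)
  have hmtop : m ≠ ⊤ := iInf_maxOp_closedBall_ne_top hfin (by linarith)
  obtain ⟨G, hGQ, hG, hGvol, hGmax⟩ := exists_subset_maxOp_le hn h hr hm0 hmtop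
  have hK : (2 * 15 ^ n : ℝ≥0∞) ≠ ⊤ := by simp [ENNReal.mul_eq_top]
  calc wInt (hatApWeight p h u) (closedBall c (2 * r))
      ≤ m ^ (1 - p) * wInt u (closedBall c (2 * r)) :=
        wInt_hatApWeight_le hp hpos measurableSet_closedBall hm0 fun x hx => biInf_le _ hx
    _ ≤ m ^ (1 - p) * (ENNReal.ofReal C * e * (2 ^ n * (2 * volume G))) := by
        gcongr
        exact (hu.wInt_closedBall_two_mul_le c hr).trans (by gcongr)
    _ = ENNReal.ofReal C * 2 ^ (n + 1) * m ^ (1 - p) * (e * volume G) := by ring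
    _ ≤ ENNReal.ofReal C * 2 ^ (n + 1) * m ^ (1 - p) *
          ((2 * 15 ^ n * m) ^ (p - 1) * wInt (hatApWeight p h u) G) := by
        gcongr _ * ?_
        exact (essInf_mul_measure_le_setLIntegral _ hGQ).trans
          (wInt_le_wInt_hatApWeight hp hpos hG (mul_ne_zero (by simp) hm0)
            (ENNReal.mul_ne_top hK hmtop) hGmax)
    _ ≤ ENNReal.ofReal C * 2 ^ (n + 1) * m ^ (1 - p) *
          ((2 * 15 ^ n * m) ^ (p - 1) * wInt (hatApWeight p h u) (closedBall c r)) := by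
        gcongr
        exact lintegral_mono_set hGQ
    _ = ENNReal.ofReal C * 2 ^ (n + 1) * (2 * 15 ^ n) ^ (p - 1) *
          wInt (hatApWeight p h u) (closedBall c r) := by
        rw [ENNReal.mul_rpow_of_ne_top hK hmtop, mul_comm _ (m ^ (p - 1)), ← mul_assoc,
          ← mul_assoc, mul_assoc _ (m ^ (1 - p)), ← ENNReal.rpow_add _ _ hm0 hmtop]
        norm_num

end Weight

/-- A weight `v = (Mh)^{1−p} u ∈ Â_p` (with `u ∈ A₁`, `1 < p < ∞`) is doubling, with a
doubling constant controlled by `C_{n,p} ‖u‖_{A₁}`: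
`v(2Q) ≤ C_{n,p} ‖u‖_{A₁} v(Q)` for every cube `Q` (sup-metric closed ball). -/
theorem hatAp_doubling (n : ℕ) (p : ℝ) (hp : 1 < p) :
    ∃ C : ℝ, 0 < C ∧
      ∀ (h u : (Fin n → ℝ) → ℝ) (Cu : ℝ), IsA1 u Cu → 1 ≤ Cu →
        MeasureTheory.LocallyIntegrable h volume →
        (∀ᵐ x, 0 < maxOp h x) → (∀ᵐ x, maxOp h x < ⊤) →
        ∀ (c : Fin n → ℝ) (r : ℝ), 0 < r →
          wInt (fun x => (maxOp h x).toReal ^ (1 - p) * u x) (Metric.closedBall c (2 * r)) ≤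
            ENNReal.ofReal (C * Cu) *
              wInt (fun x => (maxOp h x).toReal ^ (1 - p) * u x) (Metric.closedBall c r) := by
  rcases eq_or_ne n 0 with rfl | hn
  · refine ⟨1, one_pos, fun h u Cu _ hCu _ _ _ c r hr => ?_⟩
    rw [(nonempty_closedBall.mpr (by linarith : (0 : ℝ) ≤ 2 * r)).eq_univ,
      (nonempty_closedBall.mpr hr.le).eq_univ, one_mul]
    exact le_mul_of_one_le_left zero_le (ENNReal.one_le_ofReal.mpr hCu)
  · refine ⟨2 ^ (n + 1) * (2 * 15 ^ n) ^ (p - 1), by positivity,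
      fun h u Cu hu _ _ hpos hfin c r hr => ?_⟩
    refine (wInt_hatApWeight_closedBall_two_mul_le hn hp.le hu hpos hfin c hr).trans_eq ?_
    congr 1
    rw [mul_comm _ Cu, ENNReal.ofReal_mul (by linarith), ENNReal.ofReal_mul (by positivity),
      ENNReal.ofReal_pow zero_le_two, ← ENNReal.ofReal_rpow_of_nonneg (by positivity)
      (by linarith), ENNReal.ofReal_mul zero_le_two, ENNReal.ofReal_pow (by norm_num)]
    norm_num [mul_assoc]
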